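/- For every odd n ≥ 3 and every positive integer k, the pattern (4, 2, 4, ..., 4, 2, 4), i.e., a level of size 4, a level of size 2, then k - 1 levels of size 4, a level of size 2, and a final level of size 4, is in the Borda range for n voters. -/

import Mathlib

/-!
Adding two voters with mutually reverse rankings raises every Borda score by `m + 1`, so it
suffices to realize the pattern with three voters. If two of them rank the alternatives `0, …, m-1`
in their natural order and the third by a permutation `σ`, alternative `y` scores
`2 y + σ y + 3`. Cut `0, …, m-1` into consecutive blocks of sizes `4, 2, 4, …, 4, 2, 4` and let `σ`
decrease by `2` along each block: then `2 y + σ y` is constant on each block. The blocks draw their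
`σ`-values from runs of consecutive even, resp. odd, numbers (block `0` gets `0, 2, 4, 6`, block `1`
gets `1, 3`, and so on), and this can be arranged so that the block constants increase.
-/

/-- The Borda score of alternative `x` under profile `u`, where each voter's
strict linear order is encoded as a ranking bijection (`u i x = k` means `x`
is in position `k+1`, top = position 1). -/
def bordaScore {m n : ℕ} (u : Fin n → (Fin m ≃ Fin m)) (x : Fin m) : ℕ :=
  ∑ i, ((u i x : ℕ) + 1)

/-- The pattern `p = [m₁, ..., m_T]` is in the Borda range for `n` voters:
some `n`-voter profile of strict linear orders on `p.sum` alternatives has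
Borda-score equivalence classes of exactly these cardinalities, ordered by
increasing score. -/
def InBordaRange (n : ℕ) (p : List ℕ) : Prop :=
  ∃ u : Fin n → (Fin p.sum ≃ Fin p.sum), ∃ scores : Fin p.length → ℕ,
    StrictMono scores ∧
    (∀ x, ∃ j, bordaScore u x = scores j) ∧
    ∀ j : Fin p.length,
      (Finset.univ.filter (fun x => bordaScore u x = scores j)).card = p.get j

theorem List.exists_sum_take_le_lt_sum_take_succ :
    ∀ {p : List ℕ} {y : ℕ}, y < p.sum →
      ∃ j < p.length, (p.take j).sum ≤ y ∧ y < (p.take (j + 1)).sum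
  | [], y, hy => by simp at hy
  | a :: p, y, hy => by
    by_cases hya : y < a
    · exact ⟨0, by simp, by simp, by simpa using hya⟩
    · obtain ⟨j, hj, hle, hlt⟩ :=
        exists_sum_take_le_lt_sum_take_succ (p := p) (y := y - a) (by simp at hy; omega)
      refine ⟨j + 1, by simpa using hj, ?_, ?_⟩ <;>
        simp only [List.take_succ_cons, List.sum_cons] <;> omega

theorem Fin.card_filter_le_val_lt {m a b : ℕ} (hb : b ≤ m) :
    (Finset.univ.filter fun x : Fin m => a ≤ x ∧ (x : ℕ) < b).card = b - a := by
  rw [← Nat.card_Ico, ← Finset.card_map Fin.valEmbedding]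
  congr 1
  ext y
  simp only [Finset.mem_map, Finset.mem_filter, Finset.mem_univ, true_and,
    Fin.valEmbedding_apply, Finset.mem_Ico]
  exact ⟨fun ⟨x, hx, hxy⟩ => hxy ▸ hx, fun hy => ⟨⟨y, by omega⟩, hy, rfl⟩⟩

theorem inBordaRange_of_blocks {n : ℕ} {p : List ℕ} (u : Fin n → (Fin p.sum ≃ Fin p.sum))
    (c : Fin p.length → ℕ) (hc : StrictMono c)
    (hu : ∀ (j : Fin p.length) (x : Fin p.sum),
      (p.take j).sum ≤ x → (x : ℕ) < (p.take (j + 1)).sum → bordaScore u x = c j) :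
    InBordaRange n p := by
  have block (x : Fin p.sum) :
      ∃ j : Fin p.length, (p.take j).sum ≤ x ∧ (x : ℕ) < (p.take (j + 1)).sum := by
    obtain ⟨j, hj, hx⟩ := List.exists_sum_take_le_lt_sum_take_succ x.isLt
    exact ⟨⟨j, hj⟩, hx⟩
  refine ⟨u, c, hc, fun x => ?_, fun j => ?_⟩
  · obtain ⟨j, hx⟩ := block x
    exact ⟨j, hu j x hx.1 hx.2⟩
  · have level_iff (x : Fin p.sum) :
        bordaScore u x = c j ↔ (p.take j).sum ≤ x ∧ (x : ℕ) < (p.take (j + 1)).sum := by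
      refine ⟨fun hxj => ?_, fun hx => hu j x hx.1 hx.2⟩
      obtain ⟨i, hx⟩ := block x
      obtain rfl : i = j := hc.injective ((hu i x hx.1 hx.2).symm.trans hxj)
      exact hx
    rw [Finset.filter_congr fun x _ => level_iff x, Fin.card_filter_le_val_lt,
      List.sum_take_succ _ _ j.isLt, Nat.add_sub_cancel_left, List.get_eq_getElem]
    exact List.sum_take_add_sum_drop p _ ▸ Nat.le_add_right _ _

theorem bordaScore_snoc_refl_revPerm {m n : ℕ} (u : Fin n → (Fin m ≃ Fin m)) (x : Fin m) :
    bordaScore (Fin.snoc (Fin.snoc u (Equiv.refl _)) Fin.revPerm : Fin (n + 2) → _) x =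
      bordaScore u x + (m + 1) := by
  have hx := x.isLt
  simp only [bordaScore, Fin.sum_univ_castSucc, Fin.snoc_castSucc, Fin.snoc_last,
    Equiv.refl_apply, Fin.revPerm_apply, Fin.val_rev]
  omega

theorem InBordaRange.add_two {n : ℕ} {p : List ℕ} (h : InBordaRange n p) :
    InBordaRange (n + 2) p := by
  obtain ⟨u, c, hc, hcover, hcard⟩ := h
  refine ⟨Fin.snoc (Fin.snoc u (Equiv.refl _)) Fin.revPerm, fun j => c j + (p.sum + 1),
    hc.add_const _, fun x => ?_, fun j => ?_⟩
  · obtain ⟨j, hj⟩ := hcover x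
    exact ⟨j, by rw [bordaScore_snoc_refl_revPerm, hj]⟩
  · simpa only [bordaScore_snoc_refl_revPerm, Nat.add_right_cancel_iff] using hcard j

theorem InBordaRange.of_odd {n : ℕ} {p : List ℕ} (h : InBordaRange 3 p) (hn : Odd n)
    (hn3 : 3 ≤ n) : InBordaRange n p := by
  obtain ⟨r, rfl⟩ := hn
  induction r, (by omega : 1 ≤ r) using Nat.le_induction with
  | base => exact h
  | succ r _ ih => exact (ih (by omega)).add_two

theorem bordaScore_refl_refl_perm {m : ℕ} (σ : Fin m ≃ Fin m) (x : Fin m) :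
    bordaScore ![Equiv.refl _, Equiv.refl _, σ] x = 2 * x + σ x + 3 := by
  simp only [bordaScore, Fin.sum_univ_three, Matrix.cons_val, Equiv.refl_apply]
  ring

def fourTwoPattern (k : ℕ) : List ℕ := [4, 2] ++ List.replicate (k - 1) 4 ++ [2, 4]

theorem length_fourTwoPattern {k : ℕ} (hk : 1 ≤ k) : (fourTwoPattern k).length = k + 3 := by
  simp only [fourTwoPattern, List.length_append, List.length_cons, List.length_nil,
    List.length_replicate]
  omega

theorem sum_fourTwoPattern {k : ℕ} (hk : 1 ≤ k) : (fourTwoPattern k).sum = 4 * k + 8 := by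
  simp only [fourTwoPattern, List.sum_append, List.sum_cons, List.sum_nil, List.sum_replicate,
    smul_eq_mul]
  omega

def blockStart (k j : ℕ) : ℕ :=
  if j = 0 then 0 else if j = 1 then 4 else if j ≤ k then 4 * j - 2
  else if j = k + 1 then 4 * k + 2 else if j = k + 2 then 4 * k + 4 else 4 * k + 8

def blockEnd (k j : ℕ) : ℕ :=
  if j = 0 then 4 else if j = 1 then 6 else if j ≤ k then 4 * j + 2
  else if j = k + 1 then 4 * k + 4 else 4 * k + 8

theorem blockStart_succ {k : ℕ} (j : ℕ) (hk : 1 ≤ k) : blockStart k (j + 1) = blockEnd k j := by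
  unfold blockStart blockEnd
  grind

theorem sum_take_fourTwoPattern {k j : ℕ} (hk : 1 ≤ k) (hj : j ≤ k + 3) :
    ((fourTwoPattern k).take j).sum = blockStart k j := by
  match j with
  | 0 => rfl
  | 1 => rfl
  | i + 2 =>
    have tail_len : i - (k - 1) = 0 ∨ i - (k - 1) = 1 ∨ i - (k - 1) = 2 := by omega
    simp only [fourTwoPattern, List.cons_append, List.nil_append, List.take_succ_cons,
      List.sum_cons, List.take_append, List.sum_append, List.take_replicate, List.sum_replicate,
      List.length_replicate, smul_eq_mul, blockStart]
    rcases tail_len with h | h | h <;>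
      simp only [h, List.take_zero, List.take_succ_cons, List.take_nil, List.sum_cons,
        List.sum_nil] <;>
      grind

def thirdVoterRank (k y : ℕ) : ℕ :=
  if y ≤ 3 then 6 - 2 * y
  else if y ≤ 5 then 11 - 2 * y
  else if y ≤ 4 * k + 1 then
    if (y + 2) / 4 % 2 = 0 then 12 * ((y + 2) / 4) + 2 - 2 * y
    else 12 * ((y + 2) / 4) - 5 - 2 * y
  else if y ≤ 4 * k + 3 then
    if k % 2 = 1 then 12 * k + 10 - 2 * y else 12 * k + 3 - 2 * y
  else 12 * k + 15 - 2 * y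

-- The last branch is `12 * k + 15` at the last block `j = k + 2`, and keeps the map monotone beyond.
def blockValue (k j : ℕ) : ℕ :=
  if j = 0 then 6
  else if j = 1 then 11
  else if j ≤ k then if j % 2 = 0 then 12 * j + 2 else 12 * j - 5
  else if j = k + 1 then if k % 2 = 1 then 12 * k + 10 else 12 * k + 3
  else 12 * j - 9

theorem thirdVoterRank_lt {k y : ℕ} (hk : 1 ≤ k) (hy : y < 4 * k + 8) :
    thirdVoterRank k y < 4 * k + 8 := by
  unfold thirdVoterRank
  split_ifs <;> omega

theorem thirdVoterRank_injOn {k : ℕ} (hk : 1 ≤ k) :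
    Set.InjOn (thirdVoterRank k) (Set.Iio (4 * k + 8)) := by
  intro y₁ hy₁ y₂ hy₂ h
  simp only [Set.mem_Iio] at hy₁ hy₂
  unfold thirdVoterRank at h
  split_ifs at h <;> omega

theorem blockValue_strictMono {k : ℕ} (hk : 1 ≤ k) : StrictMono (blockValue k) :=
  strictMono_nat_of_lt_succ fun j => by
    unfold blockValue
    grind

theorem two_mul_add_thirdVoterRank {k j y : ℕ} (hk : 1 ≤ k) :
    blockStart k j ≤ y → y < blockEnd k j → 2 * y + thirdVoterRank k y = blockValue k j := by
  unfold blockStart blockEnd thirdVoterRank blockValue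
  split_ifs <;> omega

theorem inBordaRange_three_fourTwoPattern {k : ℕ} (hk : 1 ≤ k) :
    InBordaRange 3 (fourTwoPattern k) := by
  have hM := sum_fourTwoPattern hk
  have hy (y : Fin (fourTwoPattern k).sum) : (y : ℕ) < 4 * k + 8 := hM ▸ y.isLt
  let σ (y : Fin (fourTwoPattern k).sum) : Fin (fourTwoPattern k).sum :=
    ⟨thirdVoterRank k y, (thirdVoterRank_lt hk (hy y)).trans_eq hM.symm⟩
  have hσ : σ.Injective := fun y₁ y₂ h =>
    Fin.ext (thirdVoterRank_injOn hk (hy y₁) (hy y₂) (congrArg Fin.val h))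
  refine inBordaRange_of_blocks ![.refl _, .refl _, .ofBijective σ hσ.bijective_of_finite]
    (fun j => blockValue k j + 3)
    (((blockValue_strictMono hk).comp Fin.val_strictMono).add_const 3) fun j x hx₁ hx₂ => ?_
  have hj : (j : ℕ) < k + 3 := length_fourTwoPattern hk ▸ j.isLt
  rw [sum_take_fourTwoPattern hk hj.le] at hx₁
  rw [sum_take_fourTwoPattern hk hj, blockStart_succ _ hk] at hx₂
  rw [bordaScore_refl_refl_perm, ← two_mul_add_thirdVoterRank hk hx₁ hx₂]
  rfl

theorem stmt13 (n : ℕ) (hn : Odd n) (hn3 : 3 ≤ n) (k : ℕ) (hk : 1 ≤ k) :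
    InBordaRange n ([4, 2] ++ List.replicate (k - 1) 4 ++ [2, 4]) :=
  (inBordaRange_three_fourTwoPattern hk).of_odd hn hn3
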